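/- arXiv:1211.5933 — 3 statements merged into one kernel-verified Lean document; each statement's English description precedes it below -/
import Mathlib

section
/- Let G be a finite graph containing no induced 4-cycle and let M be a module of G. Then every minimum interval deletion set Q of G satisfies: either M ⊆ Q, or Q ∩ M is a minimum interval deletion set of the induced subgraph G[M]. -/
/-- A graph is an interval graph if each vertex can be assigned a (nonempty) closed real
interval such that two distinct vertices are adjacent iff their intervals intersect. -/
def IsIntervalGraph {V : Type*} (G : SimpleGraph V) : Prop :=
  ∃ f : V → Set ℝ,
    (∀ v, ∃ a b : ℝ, a ≤ b ∧ f v = Set.Icc a b) ∧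
    ∀ u v : V, u ≠ v → (G.Adj u v ↔ (f u ∩ f v).Nonempty)

/-- A hole is an induced (chordless) cycle on at least 4 vertices, identified
with its vertex set. -/
def IsHole {V : Type*} (G : SimpleGraph V) (H : Set V) : Prop :=
  ∃ m : ℕ, 4 ≤ m ∧ ∃ f : ZMod m → V,
    Function.Injective f ∧ Set.range f = H ∧
      ∀ i j : ZMod m, G.Adj (f i) (f j) ↔ (j = i + 1 ∨ i = j + 1)

/-- A minimal forbidden set: the induced subgraph is not interval, but every
proper subset induces an interval graph. -/
def IsMinimalForbidden {V : Type*} (G : SimpleGraph V) (X : Set V) : Prop :=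
  ¬ IsIntervalGraph (G.induce X) ∧ ∀ Y : Set V, Y ⊂ X → IsIntervalGraph (G.induce Y)

/-- A graph is prereduced if it has no minimal forbidden set of at most 10 vertices. -/
def Prereduced {V : Type*} (G : SimpleGraph V) : Prop :=
  ∀ X : Set V, X.ncard ≤ 10 → ¬ IsMinimalForbidden G X

/-- A module: any two vertices of `M` have exactly the same neighbors outside `M`. -/
def IsGraphModule {V : Type*} (G : SimpleGraph V) (M : Set V) : Prop :=
  ∀ u ∈ M, ∀ v ∈ M, ∀ x ∉ M, (G.Adj u x ↔ G.Adj v x)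

/-- A graph is reduced if it is prereduced and every nontrivial module induces a clique. -/
def Reduced {V : Type*} [Fintype V] (G : SimpleGraph V) : Prop :=
  Prereduced G ∧
    ∀ M : Set V, IsGraphModule G M → 1 < M.ncard → M.ncard < Fintype.card V →
      G.IsClique M

/-- Closed neighborhood `N[v]`. -/
def closedNbhd {V : Type*} (G : SimpleGraph V) (v : V) : Set V :=
  insert v (G.neighborSet v)

/-- Closed neighborhood of a set, `N[U] = ⋃ v ∈ U, N[v]`. -/
def closedNbhdSet {V : Type*} (G : SimpleGraph V) (U : Set V) : Set V :=
  ⋃ v ∈ U, closedNbhd G v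

/-- The set of common neighbors of a vertex set `X`. -/
def commonNbrs {V : Type*} (G : SimpleGraph V) (X : Set V) : Set V :=
  {v | ∀ x ∈ X, G.Adj v x}

/-- `P` induces a chordless path: it can be enumerated so that adjacency holds
exactly between consecutive vertices. -/
def IsInducedPath {V : Type*} (G : SimpleGraph V) (P : Set V) : Prop :=
  ∃ n : ℕ, ∃ f : Fin (n + 1) → V, Function.Injective f ∧ Set.range f = P ∧
    ∀ i j : Fin (n + 1), G.Adj (f i) (f j) ↔ (i.val + 1 = j.val ∨ j.val + 1 = i.val)

/-- A shallow terminal: a vertex `s` contained in a minimal forbidden set `W` that is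
not a hole, such that `W \ N[s]` induces a chordless path. -/
def ShallowTerminal {V : Type*} (G : SimpleGraph V) (s : V) : Prop :=
  ∃ W : Set V, IsMinimalForbidden G W ∧ s ∈ W ∧ ¬ IsHole G W ∧
    IsInducedPath G (W \ closedNbhd G s)

/-- A hole cover: a vertex set intersecting every hole. -/
def HoleCover {V : Type*} (G : SimpleGraph V) (C : Set V) : Prop :=
  ∀ H : Set V, IsHole G H → (C ∩ H).Nonempty

/-- A minimal hole cover: a hole cover no proper subset of which is a hole cover. -/
def MinimalHoleCover {V : Type*} (G : SimpleGraph V) (C : Set V) : Prop :=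
  HoleCover G C ∧ ∀ C' : Set V, C' ⊂ C → ¬ HoleCover G C'

/-- An interval deletion set: a vertex set whose removal leaves an interval graph. -/
def IntervalDeletionSet {V : Type*} (G : SimpleGraph V) (Q : Set V) : Prop :=
  IsIntervalGraph (G.induce Qᶜ)

/-- A minimum interval deletion set. -/
def MinIntervalDeletionSet {V : Type*} (G : SimpleGraph V) (Q : Set V) : Prop :=
  IntervalDeletionSet G Q ∧
    ∀ Q' : Set V, IntervalDeletionSet G Q' → Q.ncard ≤ Q'.ncard

/-- Two holes are congenial if each is contained in the closed neighborhood of the other. -/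
def Congenial {V : Type*} (G : SimpleGraph V) (H₁ H₂ : Set V) : Prop :=
  H₁ ⊆ closedNbhdSet G H₂ ∧ H₂ ⊆ closedNbhdSet G H₁

/-- The graph `G − S`: edges of `G` with both endpoints outside `S`
(vertices of `S` become isolated). -/
def deleteSet {V : Type*} (G : SimpleGraph V) (S : Set V) : SimpleGraph V where
  Adj u v := G.Adj u v ∧ u ∉ S ∧ v ∉ S
  symm := ⟨fun u v h => ⟨h.1.symm, h.2.2, h.2.1⟩⟩
  loopless := ⟨fun v h => G.loopless.irrefl v h.1⟩

/-!
Suppose `M ⊄ Q` and pick `w ∈ M \ Q`. Deleting `Q ∩ M` from `G[M]` leaves an induced subgraph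
of `G - Q`, hence an interval graph. For minimality let `Q'` be any interval deletion set of
`G[M]`. If `M` is a clique, every vertex of `M` is a true twin of `w` and can be given the
interval of `w`, so a minimum `Q` misses `M`. Otherwise two non-adjacent vertices of `M` and two
non-adjacent outside neighbours of `M` would span a hole of length 4; so the outside neighbours
of `M` form a clique, and by the Helly property their intervals share a point `t` with that of
`w`. Opening a gap in the line at `t` and placing there a model of `G[M] - Q'` shows that
`(Q \ M) ∪ Q'` is an interval deletion set of `G`, whence `|Q ∩ M| ≤ |Q'|`.
-/

open Set Function

section IntervalModel

variable {V W : Type*}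

def IsIntervalModelOn (G : SimpleGraph V) (S : Set V) (a b : V → ℝ) : Prop :=
  (∀ v ∈ S, a v ≤ b v) ∧
    ∀ u ∈ S, ∀ v ∈ S, u ≠ v → (G.Adj u v ↔ a u ≤ b v ∧ a v ≤ b u)

variable {G : SimpleGraph V} {H : SimpleGraph W}

lemma Icc_inter_Icc_nonempty_iff {a b c d : ℝ} (hab : a ≤ b) (hcd : c ≤ d) :
    (Icc a b ∩ Icc c d).Nonempty ↔ a ≤ d ∧ c ≤ b := by
  rw [Icc_inter_Icc, nonempty_Icc, max_le_iff, le_min_iff, le_min_iff]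
  tauto

lemma isIntervalGraph_iff : IsIntervalGraph G ↔ ∃ a b, IsIntervalModelOn G univ a b := by
  constructor
  · rintro ⟨f, hf, hadj⟩
    choose a b hab hfab using hf
    refine ⟨a, b, fun v _ => hab v, fun u _ v _ huv => ?_⟩
    rw [hadj u v huv, hfab, hfab, Icc_inter_Icc_nonempty_iff (hab u) (hab v)]
  · rintro ⟨a, b, hab, hadj⟩
    refine ⟨fun v => Icc (a v) (b v), fun v => ⟨_, _, hab v trivial, rfl⟩, fun u v huv => ?_⟩
    rw [hadj u trivial v trivial huv,
      Icc_inter_Icc_nonempty_iff (hab u trivial) (hab v trivial)]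

lemma IsIntervalModelOn.mono {S T : Set V} {a b : V → ℝ} (h : IsIntervalModelOn G T a b)
    (hST : S ⊆ T) : IsIntervalModelOn G S a b :=
  ⟨fun v hv => h.1 v (hST hv), fun u hu v hv => h.2 u (hST hu) v (hST hv)⟩

lemma IsIntervalModelOn.comap {S : Set V} {a b : V → ℝ} (h : IsIntervalModelOn G S a b)
    (φ : H ↪g G) : IsIntervalModelOn H (φ ⁻¹' S) (a ∘ φ) (b ∘ φ) :=
  ⟨fun v hv => h.1 (φ v) hv, fun u hu v hv huv => by
    rw [← φ.map_adj_iff]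
    exact h.2 (φ u) hu (φ v) hv (φ.injective.ne huv)⟩

lemma IsIntervalModelOn.map {T : Set W} {c d : W → ℝ} (h : IsIntervalModelOn H T c d)
    (φ : H ↪g G) : IsIntervalModelOn G (φ '' T) (extend φ c 0) (extend φ d 0) := by
  refine ⟨?_, ?_⟩
  · rintro _ ⟨v, hv, rfl⟩
    simpa only [φ.injective.extend_apply] using h.1 v hv
  · rintro _ ⟨u, hu, rfl⟩ _ ⟨v, hv, rfl⟩ huv
    simp only [φ.injective.extend_apply, φ.map_adj_iff]
    exact h.2 u hu v hv (ne_of_apply_ne φ huv)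

lemma isIntervalGraph_induce_iff {S : Set V} :
    IsIntervalGraph (G.induce S) ↔ ∃ a b, IsIntervalModelOn G S a b := by
  rw [isIntervalGraph_iff]
  constructor
  · rintro ⟨a, b, h⟩
    exact ⟨_, _, (h.map (SimpleGraph.Embedding.induce S)).mono
      fun v hv => ⟨⟨v, hv⟩, trivial, rfl⟩⟩
  · rintro ⟨a, b, h⟩
    exact ⟨_, _, (h.comap (SimpleGraph.Embedding.induce S)).mono fun v _ => v.2⟩

lemma intervalDeletionSet_iff {Q : Set V} :
    IntervalDeletionSet G Q ↔ ∃ a b, IsIntervalModelOn G Qᶜ a b :=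
  isIntervalGraph_induce_iff

end IntervalModel

noncomputable section Reals

variable (t : ℝ)

def stretchLeft (s : ℝ) : ℝ := if s ≤ t then s else s + 2

def stretchRight (s : ℝ) : ℝ := if s < t then s else s + 2

def squeeze (s : ℝ) : ℝ := t + 1 / 2 + Real.arctan s / 4

variable {t}

lemma stretchLeft_le_stretchRight_iff {p q : ℝ} :
    stretchLeft t p ≤ stretchRight t q ↔ p ≤ q := by
  unfold stretchLeft stretchRight
  split_ifs <;> constructor <;> intro <;> linarith

lemma squeeze_le_squeeze_iff {p q : ℝ} : squeeze t p ≤ squeeze t q ↔ p ≤ q := by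
  rw [squeeze, squeeze, add_le_add_iff_left, div_le_div_iff_of_pos_right four_pos,
    Real.arctan_strictMono.le_iff_le]

lemma squeeze_mem_Ioo (s : ℝ) : squeeze t s ∈ Ioo t (t + 1) := by
  have := Real.arctan_lt_pi_div_two s
  have := Real.neg_pi_div_two_lt_arctan s
  have := Real.pi_le_four
  unfold squeeze
  constructor <;> linarith

lemma le_stretchRight_and_stretchLeft_le_iff {p q a b : ℝ} (hp : p ∈ Ioo t (t + 1))
    (hq : q ∈ Ioo t (t + 1)) :
    p ≤ stretchRight t b ∧ stretchLeft t a ≤ q ↔ t ∈ Icc a b := by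
  obtain ⟨hp₁, hp₂⟩ := hp
  obtain ⟨hq₁, hq₂⟩ := hq
  unfold stretchLeft stretchRight
  rw [mem_Icc]
  split_ifs <;> constructor <;> rintro ⟨h₁, h₂⟩ <;> constructor <;> linarith

end Reals

lemma Set.Finite.exists_forall_mem_Icc {ι α : Type*} [LinearOrder α] {s : Set ι}
    (hs : s.Finite) (hne : s.Nonempty) {a b : ι → α} (h : ∀ i ∈ s, ∀ j ∈ s, a i ≤ b j) :
    ∃ t, ∀ i ∈ s, t ∈ Icc (a i) (b i) := by
  obtain ⟨i₀, hi₀, hmax⟩ := s.exists_max_image a hs hne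
  exact ⟨a i₀, fun i hi => ⟨hmax i hi, h i₀ hi₀ i hi⟩⟩

section Substitution

variable {V : Type*} {G : SimpleGraph V}

lemma IntervalDeletionSet.induce {Q : Set V} (hQ : IntervalDeletionSet G Q) (M : Set V) :
    IntervalDeletionSet (G.induce M) (Subtype.val ⁻¹' Q) := by
  obtain ⟨a, b, h⟩ := intervalDeletionSet_iff.1 hQ
  exact intervalDeletionSet_iff.2 ⟨_, _, h.comap (SimpleGraph.Embedding.induce M)⟩

lemma IntervalDeletionSet.diff_singleton_of_twin {Q : Set V} (hQ : IntervalDeletionSet G Q)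
    {m w : V} (hwQ : w ∉ Q) (hmw : G.Adj m w)
    (htwin : ∀ x, x ≠ m → x ≠ w → (G.Adj m x ↔ G.Adj w x)) :
    IntervalDeletionSet G (Q \ {m}) := by
  classical
  obtain ⟨a, b, h⟩ := intervalDeletionSet_iff.1 hQ
  set ρ : V → V := fun v => if v = m then w else v with hρ_def
  have hρ : ∀ v ∈ (Q \ {m})ᶜ, ρ v ∈ Qᶜ := by
    intro v hv
    by_cases hvm : v = m
    · simpa [hρ_def, hvm] using hwQ
    · simpa [hρ_def, hvm] using hv
  have hsame : ∀ u v, u ≠ v → ρ u = ρ v → G.Adj u v := by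
    intro u v huv hρuv
    by_cases hum : u = m <;> by_cases hvm : v = m <;> simp_all [G.adj_comm]
  have hdiff : ∀ u v, ρ u ≠ ρ v → (G.Adj u v ↔ G.Adj (ρ u) (ρ v)) := by
    intro u v hρuv
    by_cases hum : u = m <;> by_cases hvm : v = m
    · simp_all
    · subst hum
      simp only [hρ_def, if_pos rfl, if_neg hvm] at hρuv ⊢
      exact htwin v hvm (Ne.symm hρuv)
    · subst hvm
      simp only [hρ_def, if_pos rfl, if_neg hum] at hρuv ⊢
      rw [G.adj_comm, G.adj_comm u]
      exact htwin u hum hρuv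
    · simp [hρ_def, hum, hvm]
  refine intervalDeletionSet_iff.2 ⟨a ∘ ρ, b ∘ ρ, fun v hv => h.1 _ (hρ v hv),
    fun u hu v hv huv => ?_⟩
  by_cases hρuv : ρ u = ρ v
  · simp only [comp_apply, hρuv]
    exact iff_of_true (hsame u v huv hρuv) ⟨h.1 _ (hρ v hv), h.1 _ (hρ v hv)⟩
  · exact (hdiff u v hρuv).trans (h.2 _ (hρ u hu) _ (hρ v hv) hρuv)

lemma IsIntervalModelOn.exists_mem_Icc_iff_adj {S X : Set V} {a b : V → ℝ}
    (h : IsIntervalModelOn G S a b) {w : V} (hw : w ∈ S) (hXS : X ⊆ S) (hwX : w ∉ X)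
    (hX : X.Finite) (hclique : G.IsClique {x ∈ X | G.Adj w x}) :
    ∃ t, ∀ x ∈ X, (G.Adj w x ↔ t ∈ Icc (a x) (b x)) := by
  set N := {x ∈ X | G.Adj w x}
  have hN : G.IsClique (insert w N) := G.isClique_insert.2 ⟨hclique, fun x hx _ => hx.2⟩
  have hNS : insert w N ⊆ S := insert_subset hw fun x hx => hXS hx.1
  obtain ⟨t, ht⟩ := ((hX.subset (sep_subset _ _)).insert w).exists_forall_mem_Icc
    (insert_nonempty w N) (a := a) (b := b) fun i hi j hj => by
      rcases eq_or_ne i j with rfl | hij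
      · exact h.1 i (hNS hi)
      · exact ((h.2 i (hNS hi) j (hNS hj) hij).1 (hN hi hj hij)).1
  refine ⟨t, fun x hx => ⟨fun hwx => ht x (mem_insert_of_mem _ ⟨hx, hwx⟩), fun hxt => ?_⟩⟩
  have hwt := ht w (mem_insert w N)
  exact (h.2 w hw x (hXS hx) (ne_of_mem_of_not_mem hx hwX).symm).2
    ⟨hwt.1.trans hxt.2, hxt.1.trans hwt.2⟩

/-- Stretching the line at `t` by a gap of length `2` and squeezing the model of `T` into
`(t, t + 1)` places `T` inside exactly those intervals of `S` that contain `t`. -/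
lemma IsIntervalModelOn.substitute {S T : Set V} {a b c d : V → ℝ}
    (hab : IsIntervalModelOn G S a b) (hcd : IsIntervalModelOn G T c d) (hST : Disjoint S T)
    {t : ℝ} (hcross : ∀ u ∈ T, ∀ x ∈ S, (G.Adj u x ↔ t ∈ Icc (a x) (b x))) :
    ∃ a' b', IsIntervalModelOn G (S ∪ T) a' b' := by
  classical
  set a' : V → ℝ := fun v => if v ∈ T then squeeze t (c v) else stretchLeft t (a v)
  set b' : V → ℝ := fun v => if v ∈ T then squeeze t (d v) else stretchRight t (b v)
  have hS : ∀ x ∈ S, a' x = stretchLeft t (a x) ∧ b' x = stretchRight t (b x) := fun x hx => by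
    simp [a', b', hST.notMem_of_mem_left hx]
  have hT : ∀ u ∈ T, a' u = squeeze t (c u) ∧ b' u = squeeze t (d u) := fun u hu => by
    simp [a', b', hu]
  have hcross' : ∀ u ∈ T, ∀ x ∈ S, (G.Adj u x ↔ a' u ≤ b' x ∧ a' x ≤ b' u) := by
    intro u hu x hx
    rw [hcross u hu x hx, (hS x hx).1, (hS x hx).2, (hT u hu).1, (hT u hu).2,
      le_stretchRight_and_stretchLeft_le_iff (squeeze_mem_Ioo _) (squeeze_mem_Ioo _)]
  refine ⟨a', b', ?_, ?_⟩
  · rintro v (hv | hv)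
    · rw [(hS v hv).1, (hS v hv).2, stretchLeft_le_stretchRight_iff]
      exact hab.1 v hv
    · rw [(hT v hv).1, (hT v hv).2, squeeze_le_squeeze_iff]
      exact hcd.1 v hv
  · rintro u (hu | hu) v (hv | hv) huv
    · rw [(hS u hu).1, (hS u hu).2, (hS v hv).1, (hS v hv).2, stretchLeft_le_stretchRight_iff,
        stretchLeft_le_stretchRight_iff]
      exact hab.2 u hu v hv huv
    · rw [G.adj_comm, and_comm]
      exact hcross' v hv u hu
    · exact hcross' u hu v hv
    · rw [(hT u hu).1, (hT u hu).2, (hT v hv).1, (hT v hv).2, squeeze_le_squeeze_iff,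
        squeeze_le_squeeze_iff]
      exact hcd.2 u hu v hv huv

lemma IntervalDeletionSet.substitute_module [Finite V] {M Q : Set V} (hM : IsGraphModule G M)
    {w : V} (hwM : w ∈ M) (hwQ : w ∉ Q) (hclique : G.IsClique {x | x ∉ M ∧ G.Adj w x})
    (hQ : IntervalDeletionSet G Q) {Q' : Set M} (hQ' : IntervalDeletionSet (G.induce M) Q') :
    IntervalDeletionSet G (Q \ M ∪ Subtype.val '' Q') := by
  obtain ⟨a, b, hab⟩ := intervalDeletionSet_iff.1 hQ
  obtain ⟨c, d, hcd⟩ := intervalDeletionSet_iff.1 hQ'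
  have hN : {x ∈ Qᶜ \ M | G.Adj w x} ⊆ {x | x ∉ M ∧ G.Adj w x} := fun _ hx => ⟨hx.1.2, hx.2⟩
  obtain ⟨t, ht⟩ := hab.exists_mem_Icc_iff_adj hwQ sdiff_subset (fun hw => hw.2 hwM)
    (toFinite _) (hclique.subset hN)
  obtain ⟨a', b', h⟩ :=
    (hab.mono sdiff_subset).substitute (hcd.map (SimpleGraph.Embedding.induce M))
    (disjoint_left.2 <| by rintro x hx ⟨u, -, rfl⟩; exact hx.2 u.2) (t := t)
    (by rintro _ ⟨u, -, rfl⟩ x hx; exact (hM u u.2 w hwM x hx.2).trans (ht x hx))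
  refine intervalDeletionSet_iff.2 ⟨a', b', h.mono fun v hv => ?_⟩
  by_cases hvM : v ∈ M
  · exact Or.inr ⟨⟨v, hvM⟩, fun hv' => hv (Or.inr ⟨_, hv', rfl⟩), rfl⟩
  · exact Or.inl ⟨fun hvQ => hv (Or.inl ⟨hvQ, hvM⟩), hvM⟩

end Substitution

section Modules

variable {V : Type*} {G : SimpleGraph V}

lemma exists_isHole_ncard_four {u x v y : V} (hux : G.Adj u x) (hxv : G.Adj x v)
    (hvy : G.Adj v y) (hyu : G.Adj y u) (huv : ¬ G.Adj u v) (hxy : ¬ G.Adj x y)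
    (hu_v : u ≠ v) (hx_y : x ≠ y) : ∃ H : Set V, IsHole G H ∧ H.ncard = 4 := by
  have := hux.ne; have := hxv.ne; have := hvy.ne; have := hyu.ne
  have hcases : ∀ i : ZMod 4, i = 0 ∨ i = 1 ∨ i = 2 ∨ i = 3 := by decide
  let f : ZMod 4 → V := ![u, x, v, y]
  have hf : Injective f := by
    intro i j hij
    rcases hcases i with rfl | rfl | rfl | rfl <;> rcases hcases j with rfl | rfl | rfl | rfl <;>
      simp_all [f, eq_comm]
  refine ⟨range f, ⟨4, le_rfl, f, hf, rfl, fun i j => ?_⟩, ?_⟩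
  · rcases hcases i with rfl | rfl | rfl | rfl <;> rcases hcases j with rfl | rfl | rfl | rfl <;>
      simp_all [f, G.adj_comm] <;> decide
  · rw [ncard_range_of_injective hf, Nat.card_zmod]

lemma IsGraphModule.isClique_outsideNbrs (h4 : ¬ ∃ H : Set V, IsHole G H ∧ H.ncard = 4)
    {M : Set V} (hM : IsGraphModule G M) (hMc : ¬ G.IsClique M) {w : V} (hwM : w ∈ M) :
    G.IsClique {x | x ∉ M ∧ G.Adj w x} := by
  obtain ⟨p, hp, q, hq, hpq, hnpq⟩ : ∃ p ∈ M, ∃ q ∈ M, p ≠ q ∧ ¬ G.Adj p q := by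
    simpa [SimpleGraph.IsClique, Set.Pairwise] using hMc
  rintro x ⟨hxM, hwx⟩ y ⟨hyM, hwy⟩ hxy
  by_contra hnxy
  exact h4 (exists_isHole_ncard_four ((hM p hp w hwM x hxM).2 hwx)
    ((hM q hq w hwM x hxM).2 hwx).symm ((hM q hq w hwM y hyM).2 hwy)
    ((hM p hp w hwM y hyM).2 hwy).symm hnpq hnxy hpq hxy)

lemma MinIntervalDeletionSet.disjoint_of_isClique [Finite V] {M Q : Set V}
    (hQ : MinIntervalDeletionSet G Q) (hM : IsGraphModule G M) (hMc : G.IsClique M) {w : V}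
    (hwM : w ∈ M) (hwQ : w ∉ Q) : Disjoint Q M := by
  refine disjoint_left.2 fun m hmQ hmM => ?_
  have hmw : m ≠ w := fun h => hwQ (h ▸ hmQ)
  have htwin : ∀ x, x ≠ m → x ≠ w → (G.Adj m x ↔ G.Adj w x) := by
    intro x hxm hxw
    by_cases hxM : x ∈ M
    · exact iff_of_true (hMc hmM hxM hxm.symm) (hMc hwM hxM hxw.symm)
    · exact hM m hmM w hwM x hxM
  have hdel := hQ.1.diff_singleton_of_twin hwQ (hMc hmM hwM hmw) htwin
  exact (ncard_sdiff_singleton_lt_of_mem hmQ (toFinite Q)).not_ge (hQ.2 _ hdel)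

lemma ncard_preimage_val_le_of_le_ncard_union [Finite V] {M Q : Set V} {Q' : Set M}
    (h : Q.ncard ≤ (Q \ M ∪ Subtype.val '' Q').ncard) :
    (Subtype.val ⁻¹' Q : Set M).ncard ≤ Q'.ncard := by
  have hpre : (Subtype.val ⁻¹' Q : Set M).ncard = (Q ∩ M).ncard := by
    rw [← ncard_image_of_injective _ Subtype.val_injective, Subtype.image_preimage_coe,
      inter_comm]
  have himg := ncard_image_of_injective Q' Subtype.val_injective
  have hsplit := ncard_inter_add_ncard_sdiff_eq_ncard Q M (toFinite Q)
  have hunion := ncard_union_le (Q \ M) (Subtype.val '' Q')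
  omega

end Modules

/-- In a graph with no induced 4-cycle, a minimum interval deletion set
either contains a module `M` or meets it in a minimum interval deletion set of `G[M]`. -/
theorem stmt_6 {V : Type*} [Fintype V] (G : SimpleGraph V)
    (h4 : ¬ ∃ H : Set V, IsHole G H ∧ H.ncard = 4)
    (M : Set V) (hM : IsGraphModule G M)
    (Q : Set V) (hQ : MinIntervalDeletionSet G Q) :
    M ⊆ Q ∨ MinIntervalDeletionSet (G.induce M) (Subtype.val ⁻¹' Q) := by
  refine or_iff_not_imp_left.2 fun hMQ => ?_
  obtain ⟨w, hwM, hwQ⟩ := not_subset.1 hMQ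
  refine ⟨hQ.1.induce M, fun Q' hQ' => ?_⟩
  by_cases hMc : G.IsClique M
  · have hQM := hQ.disjoint_of_isClique hM hMc hwM hwQ
    have : (Subtype.val ⁻¹' Q : Set M) = ∅ :=
      eq_empty_of_forall_notMem fun v hv => disjoint_left.1 hQM hv v.2
    simp [this]
  · exact ncard_preimage_val_le_of_le_ncard_union <| hQ.2 _ <|
      hQ.1.substitute_module hM hwM hwQ (hM.isClique_outsideNbrs h4 hMc hwM) hQ'
end

section
/- Let G be a finite prereduced graph and let H₁ and H₂ be congenial holes of G. Then the set of common neighbors of H₁ equals the set of common neighbors of H₂, and moreover no vertex of H₁ is a common neighbor of H₂ and no vertex of H₂ is a common neighbor of H₁. -/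
open Set

section IntervalOrder

variable {α : Type*} [LinearOrder α]

theorem Set.OrdConnected.lt_of_disjoint {R I : Set α} (hR : R.OrdConnected) (hI : I.OrdConnected)
    (hRI : Disjoint R I) {x c : α} (hx : x ∈ R) (hc : c ∈ I) (hxc : x < c)
    {r i : α} (hr : r ∈ R) (hi : i ∈ I) : r < i := by
  have hxi : x < i := by
    by_contra! hix
    exact disjoint_left.mp hRI hx (hI.out hi hc ⟨hix, hxc.le⟩)
  by_contra! hir
  exact disjoint_left.mp hRI (hR.out hx hr ⟨hxi.le, hir⟩) hi

theorem false_of_ordConnected_path_of_lt_of_lt {B R₁ S₁ R₂ S₂ : Set α} (hB : B.OrdConnected)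
    (hR₁ : R₁.OrdConnected) (hS₁ : S₁.OrdConnected) (hR₂ : R₂.OrdConnected)
    (hS₂ : S₂.OrdConnected) (hR₁S₁ : Disjoint R₁ S₁) (hR₂B : Disjoint R₂ B)
    (hS₂B : Disjoint S₂ B) (hBR₁ : (B ∩ R₁).Nonempty) (hBS₁ : (B ∩ S₁).Nonempty)
    (hR₂R₁ : (R₂ ∩ R₁).Nonempty) (hS₂S₁ : (S₂ ∩ S₁).Nonempty)
    {x z c : α} (hx : x ∈ R₂) (hz : z ∈ S₂) (hc : c ∈ B) (hxc : x < c) (hzc : z < c) : False := by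
  obtain ⟨p, hpB, hpR⟩ := hBR₁
  obtain ⟨q, hqB, hqS⟩ := hBS₁
  obtain ⟨t, htR₂, htR₁⟩ := hR₂R₁
  obtain ⟨u, huS₂, huS₁⟩ := hS₂S₁
  have htp := hR₂.lt_of_disjoint hB hR₂B hx hc hxc htR₂ hpB
  have htq := hR₂.lt_of_disjoint hB hR₂B hx hc hxc htR₂ hqB
  have hup := hS₂.lt_of_disjoint hB hS₂B hz hc hzc huS₂ hpB
  have huq := hS₂.lt_of_disjoint hB hS₂B hz hc hzc huS₂ hqB
  -- `min p q` lies in both `[t, p] ⊆ R₁` and `[u, q] ⊆ S₁`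
  exact disjoint_left.mp hR₁S₁ (hR₁.out htR₁ hpR ⟨le_min htp.le htq.le, min_le_left p q⟩)
    (hS₁.out huS₁ hqS ⟨le_min hup.le huq.le, min_le_right p q⟩)

theorem subset_of_ordConnected_path {B R₁ S₁ R₂ S₂ J : Set α} (hB : B.OrdConnected)
    (hR₁ : R₁.OrdConnected) (hS₁ : S₁.OrdConnected) (hR₂ : R₂.OrdConnected)
    (hS₂ : S₂.OrdConnected) (hJ : J.OrdConnected) (hR₁S₁ : Disjoint R₁ S₁)
    (hR₂B : Disjoint R₂ B) (hS₂B : Disjoint S₂ B) (hBR₁ : (B ∩ R₁).Nonempty)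
    (hBS₁ : (B ∩ S₁).Nonempty) (hR₂R₁ : (R₂ ∩ R₁).Nonempty) (hS₂S₁ : (S₂ ∩ S₁).Nonempty)
    (hJR₂ : (J ∩ R₂).Nonempty) (hJS₂ : (J ∩ S₂).Nonempty) : B ⊆ J := by
  intro c hc
  obtain ⟨x, hxJ, hxR₂⟩ := hJR₂
  obtain ⟨z, hzJ, hzS₂⟩ := hJS₂
  have hxc : x ≠ c := fun h => disjoint_left.mp hR₂B hxR₂ (h ▸ hc)
  have hzc : z ≠ c := fun h => disjoint_left.mp hS₂B hzS₂ (h ▸ hc)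
  rcases hxc.lt_or_gt with hxc | hxc <;> rcases hzc.lt_or_gt with hzc | hzc
  · exact (false_of_ordConnected_path_of_lt_of_lt hB hR₁ hS₁ hR₂ hS₂ hR₁S₁ hR₂B hS₂B hBR₁ hBS₁
      hR₂R₁ hS₂S₁ hxR₂ hzS₂ hc hxc hzc).elim
  · exact hJ.out hxJ hzJ ⟨hxc.le, hzc.le⟩
  · exact hJ.out hzJ hxJ ⟨hzc.le, hxc.le⟩
  · exact (false_of_ordConnected_path_of_lt_of_lt (α := αᵒᵈ) hB.dual hR₁.dual hS₁.dual hR₂.dual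
      hS₂.dual hR₁S₁ hR₂B hS₂B hBR₁ hBS₁ hR₂R₁ hS₂S₁ hxR₂ hzS₂ hc hxc hzc).elim

end IntervalOrder

namespace IsIntervalGraph

variable {V : Type*} {G : SimpleGraph V}

theorem exists_ordConnected_model (hG : IsIntervalGraph G) :
    ∃ I : V → Set ℝ, (∀ v, (I v).OrdConnected) ∧
      ∀ u v, u ≠ v → (G.Adj u v ↔ ¬ Disjoint (I u) (I v)) := by
  obtain ⟨I, hIcc, hadj⟩ := hG
  refine ⟨I, fun v => ?_, fun u v huv => (hadj u v huv).trans not_disjoint_iff_nonempty_inter.symm⟩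
  obtain ⟨a, b, -, hab⟩ := hIcc v
  exact hab ▸ ordConnected_Icc

theorem adj_of_adj_ends_of_isInducedPath (hG : IsIntervalGraph G) {v y r₂ r₁ b s₁ s₂ : V}
    (hr₂r₁ : G.Adj r₂ r₁) (hr₁b : G.Adj r₁ b) (hbs₁ : G.Adj b s₁) (hs₁s₂ : G.Adj s₁ s₂)
    (hr₁s₁ : ¬ G.Adj r₁ s₁) (hr₂b : ¬ G.Adj r₂ b) (hbs₂ : ¬ G.Adj b s₂)
    (hne₁ : r₁ ≠ s₁) (hne₂ : r₂ ≠ b) (hne₃ : b ≠ s₂)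
    (hvr₂ : G.Adj v r₂) (hvs₂ : G.Adj v s₂) (hyb : G.Adj y b) (hvy : v ≠ y) : G.Adj v y := by
  obtain ⟨I, hI, hadj⟩ := hG.exists_ordConnected_model
  have hdisj : ∀ {u w}, u ≠ w → ¬ G.Adj u w → Disjoint (I u) (I w) := fun huw h =>
    not_not.mp (mt (hadj _ _ huw).mpr h)
  have hmeet : ∀ {u w}, G.Adj u w → (I u ∩ I w).Nonempty := fun h =>
    not_disjoint_iff_nonempty_inter.mp ((hadj _ _ h.ne).mp h)
  have hbv : I b ⊆ I v := subset_of_ordConnected_path (hI b) (hI r₁) (hI s₁) (hI r₂) (hI s₂)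
    (hI v) (hdisj hne₁ hr₁s₁) (hdisj hne₂ hr₂b) (hdisj hne₃.symm (mt G.adj_symm hbs₂))
    (hmeet hr₁b.symm) (hmeet hbs₁) (hmeet hr₂r₁) (hmeet hs₁s₂.symm) (hmeet hvr₂) (hmeet hvs₂)
  obtain ⟨w, hwy, hwb⟩ := hmeet hyb
  exact (hadj v y hvy).mpr (not_disjoint_iff.mpr ⟨w, hbv hwb, hwy⟩)

end IsIntervalGraph

section Prereduced

variable {V : Type*} {G : SimpleGraph V}

theorem exists_isMinimalForbidden_subset {X : Set V} (hX : X.Finite)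
    (hXG : ¬ IsIntervalGraph (G.induce X)) : ∃ Y ⊆ X, IsMinimalForbidden G Y := by
  let S : Set (Set V) := {Y | Y ⊆ X ∧ ¬ IsIntervalGraph (G.induce Y)}
  have hS : S.Finite := hX.finite_subsets.subset fun Y hY => hY.1
  obtain ⟨Y, hYX, ⟨-, hYG⟩, hmin⟩ := hS.exists_le_minimal (a := X) ⟨subset_rfl, hXG⟩
  refine ⟨Y, hYX, hYG, fun Z hZY => ?_⟩
  by_contra hZG
  exact hZY.not_subset (hmin ⟨hZY.subset.trans hYX, hZG⟩ hZY.subset)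

theorem Prereduced.isIntervalGraph_induce (hG : Prereduced G) (s : Finset V) (hs : s.card ≤ 10) :
    IsIntervalGraph (G.induce ↑s) := by
  by_contra hsG
  obtain ⟨Y, hYs, hY⟩ := exists_isMinimalForbidden_subset s.finite_toSet hsG
  exact hG Y ((Set.ncard_le_ncard hYs s.finite_toSet).trans (by simpa using hs)) hY

end Prereduced

theorem ZMod.natCast_ne_zero_of_lt {m n : ℕ} (hn : 0 < n) (hnm : n < m) : (n : ZMod m) ≠ 0 := by
  rw [Ne, ZMod.natCast_eq_zero_iff]
  exact Nat.not_dvd_of_pos_of_lt hn hnm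

section HoleEnumeration

variable {V : Type*} {G : SimpleGraph V} {m : ℕ} {f : ZMod m → V}
  (hadj : ∀ i j, G.Adj (f i) (f j) ↔ (j = i + 1 ∨ i = j + 1))
include hadj

theorem adj_of_eq_add_one {i j : ZMod m} (h : j = i + 1) : G.Adj (f i) (f j) :=
  (hadj i j).mpr (Or.inl h)

theorem not_adj_of_eq_add_two (hm : 3 < m) {i j : ZMod m} (h : j = i + 2) :
    ¬ G.Adj (f i) (f j) := by
  have h1 : ((1 : ℕ) : ZMod m) ≠ 0 := ZMod.natCast_ne_zero_of_lt one_pos (by omega)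
  have h3 : ((3 : ℕ) : ZMod m) ≠ 0 := ZMod.natCast_ne_zero_of_lt three_pos hm
  push_cast at h1 h3
  rw [hadj]
  rintro (h' | h')
  · exact h1 (by linear_combination h' - h)
  · exact h3 (by linear_combination -(h + h'))

end HoleEnumeration

theorem Function.Injective.ne_of_eq_add_two {V : Type*} {m : ℕ} {f : ZMod m → V}
    (hf : Function.Injective f) (hm : 2 < m) {i j : ZMod m} (h : j = i + 2) : f i ≠ f j := by
  have h2 : ((2 : ℕ) : ZMod m) ≠ 0 := ZMod.natCast_ne_zero_of_lt two_pos hm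
  push_cast at h2
  exact fun hij => h2 (by linear_combination -(h + hf hij))

section Holes

variable {V : Type*} {G : SimpleGraph V}

theorem Prereduced.adj_of_forall_adj_hole (hG : Prereduced G) {m : ℕ} (hm : 4 ≤ m)
    {f : ZMod m → V} (hf : Function.Injective f)
    (hadj : ∀ i j, G.Adj (f i) (f j) ↔ (j = i + 1 ∨ i = j + 1)) {v y : V} {k : ZMod m}
    (hv : ∀ j, G.Adj v (f j)) (hy : G.Adj y (f k)) (hvy : v ≠ y) : G.Adj v y := by
  classical
  let s : Finset V := [v, y, f (k - 2), f (k - 1), f k, f (k + 1), f (k + 2)].toFinset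
  have hs := hG.isIntervalGraph_induce s ((List.toFinset_card_le _).trans (by norm_num))
  exact hs.adj_of_adj_ends_of_isInducedPath (v := ⟨v, by simp [s]⟩) (y := ⟨y, by simp [s]⟩)
    (r₂ := ⟨f (k - 2), by simp [s]⟩) (r₁ := ⟨f (k - 1), by simp [s]⟩) (b := ⟨f k, by simp [s]⟩)
    (s₁ := ⟨f (k + 1), by simp [s]⟩) (s₂ := ⟨f (k + 2), by simp [s]⟩)
    (adj_of_eq_add_one hadj (by ring)) (adj_of_eq_add_one hadj (by ring))
    (adj_of_eq_add_one hadj (by ring)) (adj_of_eq_add_one hadj (by ring))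
    (not_adj_of_eq_add_two hadj hm (by ring)) (not_adj_of_eq_add_two hadj hm (by ring))
    (not_adj_of_eq_add_two hadj hm (by ring))
    (ne_of_apply_ne Subtype.val (hf.ne_of_eq_add_two (by omega) (by ring)))
    (ne_of_apply_ne Subtype.val (hf.ne_of_eq_add_two (by omega) (by ring)))
    (ne_of_apply_ne Subtype.val (hf.ne_of_eq_add_two (by omega) (by ring)))
    (hv _) (hv _) hy (ne_of_apply_ne Subtype.val hvy)

theorem Prereduced.closedNbhdSet_subset_closedNbhd (hG : Prereduced G) {H : Set V}
    (hH : IsHole G H) {v : V} (hv : v ∈ commonNbrs G H) : closedNbhdSet G H ⊆ closedNbhd G v := by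
  obtain ⟨m, hm, f, hf, rfl, hadj⟩ := hH
  intro y hy
  simp only [closedNbhdSet, closedNbhd, mem_iUnion, mem_insert_iff,
    SimpleGraph.mem_neighborSet] at hy ⊢
  obtain ⟨-, ⟨k, rfl⟩, rfl | hky⟩ := hy
  · exact .inr (hv _ ⟨k, rfl⟩)
  · by_cases hvy : v = y
    · exact .inl hvy.symm
    · exact .inr (hG.adj_of_forall_adj_hole hm hf hadj (fun j => hv _ ⟨j, rfl⟩) hky.symm hvy)

theorem IsHole.not_subset_closedNbhd {H : Set V} (hH : IsHole G H) {v : V} (hv : v ∈ H) :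
    ¬ H ⊆ closedNbhd G v := by
  obtain ⟨m, hm, f, hf, rfl, hadj⟩ := hH
  obtain ⟨k, rfl⟩ := hv
  intro hsub
  rcases hsub ⟨k + 2, rfl⟩ with h | h
  · exact hf.ne_of_eq_add_two (by omega) rfl h.symm
  · exact not_adj_of_eq_add_two hadj (by omega) rfl h

theorem Congenial.symm {H₁ H₂ : Set V} (h : Congenial G H₁ H₂) : Congenial G H₂ H₁ :=
  ⟨h.2, h.1⟩

theorem Prereduced.notMem_commonNbrs (hG : Prereduced G) {H₁ H₂ : Set V} (h₁ : IsHole G H₁)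
    (h₂ : IsHole G H₂) (h₁₂ : H₁ ⊆ closedNbhdSet G H₂) {v : V} (hv : v ∈ H₁) :
    v ∉ commonNbrs G H₂ := fun hv₂ =>
  h₁.not_subset_closedNbhd hv (h₁₂.trans (hG.closedNbhdSet_subset_closedNbhd h₂ hv₂))

theorem Prereduced.commonNbrs_subset_of_congenial (hG : Prereduced G) {H₁ H₂ : Set V}
    (h₁ : IsHole G H₁) (h₂ : IsHole G H₂) (hcong : Congenial G H₁ H₂) :
    commonNbrs G H₁ ⊆ commonNbrs G H₂ := by
  intro v hv y hy
  rcases hcong.2.trans (hG.closedNbhdSet_subset_closedNbhd h₁ hv) hy with rfl | hvy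
  · exact absurd hv (hG.notMem_commonNbrs h₂ h₁ hcong.2 hy)
  · exact hvy

end Holes

theorem stmt_12_general {V : Type*} (G : SimpleGraph V) (hG : Prereduced G)
    (H₁ H₂ : Set V) (h1 : IsHole G H₁) (h2 : IsHole G H₂)
    (hcong : Congenial G H₁ H₂) :
    commonNbrs G H₁ = commonNbrs G H₂ ∧
      (∀ v ∈ H₁, v ∉ commonNbrs G H₂) ∧ (∀ v ∈ H₂, v ∉ commonNbrs G H₁) :=
  ⟨(hG.commonNbrs_subset_of_congenial h1 h2 hcong).antisymm
      (hG.commonNbrs_subset_of_congenial h2 h1 hcong.symm),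
    fun _ hv => hG.notMem_commonNbrs h1 h2 hcong.1 hv,
    fun _ hv => hG.notMem_commonNbrs h2 h1 hcong.2 hv⟩

/-- Congenial holes in a prereduced graph have the same common neighbors,
and no vertex of one is a common neighbor of the other. -/
theorem stmt_12 {V : Type*} [Fintype V] (G : SimpleGraph V) (hG : Prereduced G)
    (H₁ H₂ : Set V) (h1 : IsHole G H₁) (h2 : IsHole G H₂)
    (hcong : Congenial G H₁ H₂) :
    commonNbrs G H₁ = commonNbrs G H₂ ∧
      (∀ v ∈ H₁, v ∉ commonNbrs G H₂) ∧ (∀ v ∈ H₂, v ∉ commonNbrs G H₁) :=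
  stmt_12_general G hG H₁ H₂ h1 h2 hcong
end

section
/- Let G be a finite prereduced graph and let H₁ and H₂ be holes of G such that H₁ ∩ N[H₂] ≠ ∅ (the holes are adjacent) but H₁ ⊄ N[H₂]. Then every vertex of H₁ ∩ N[H₂] is a common neighbor of H₂, i.e., H₁ ∩ N[H₂] ⊆ N̂(H₂); in particular, H₁ and H₂ are disjoint. -/
/-!
In a prereduced graph every induced subgraph on at most ten vertices is an interval graph, so
there is no hole of length at most ten, no long claw (its three ends form an asteroidal triple)
and no induced path `v₁ … v₅` with a vertex `y` seeing `v₁, v₅` and a neighbour of `v₃` not seeing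
`y`; the last fact makes every other vertex of `N[H]` adjacent to each common neighbour of `H`.

The key lemma: if `x ∈ N[H]` has a neighbour `u ∉ N[H]` and `u` a neighbour `z ∉ N[x]`, then `x`
sees all of `H`. Otherwise `x` has a last neighbour `f R` on the cycle `f` of `H`; if `f R` is
isolated among the neighbours of `x` it centres a long claw, and if not, `x` also has a first
neighbour `f L ≠ f R` and itself centres a long claw with legs through `f L`, `f R` and `u`.

Walking along `H₁`, the last vertex `y` of an arc inside `N[H₂]` is therefore a common neighbour
of `H₂`. Every vertex of `H₁ ∩ N[H₂]` is adjacent to `y`, so it is `y` or its predecessor, and the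
key lemma applies to the predecessor as well.
-/

open Set

section

variable {V : Type*} {G : SimpleGraph V}

@[simp] lemma mem_closedNbhd {u v : V} : u ∈ closedNbhd G v ↔ u = v ∨ G.Adj v u := Iff.rfl

lemma mem_closedNbhd_comm {u v : V} : u ∈ closedNbhd G v ↔ v ∈ closedNbhd G u := by
  simp only [mem_closedNbhd, eq_comm, G.adj_comm]

lemma notMem_closedNbhd_comm {u v : V} : u ∉ closedNbhd G v ↔ v ∉ closedNbhd G u :=
  mem_closedNbhd_comm.not

lemma mem_closedNbhdSet {x : V} {U : Set V} :
    x ∈ closedNbhdSet G U ↔ ∃ v ∈ U, x ∈ closedNbhd G v := by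
  simp [closedNbhdSet]

lemma mem_closedNbhdSet_of_mem {x : V} {U : Set V} (hx : x ∈ U) : x ∈ closedNbhdSet G U :=
  mem_closedNbhdSet.2 ⟨x, hx, Or.inl rfl⟩

theorem ZMod.exists_and_not_add_one {m : ℕ} [NeZero m] {P : ZMod m → Prop}
    (h₁ : ∃ i, P i) (h₂ : ∃ i, ¬ P i) : ∃ i, P i ∧ ¬ P (i + 1) := by
  obtain ⟨a, ha⟩ := h₁
  obtain ⟨b, hb⟩ := h₂
  by_contra! h
  have hP : ∀ n : ℕ, P (a + n) := fun n => by
    induction n with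
    | zero => simpa using ha
    | succ n ih => simpa [add_assoc] using h _ ih
  exact hb (by simpa using hP (b - a).val)

theorem ZMod.exists_and_not_sub_one {m : ℕ} [NeZero m] {P : ZMod m → Prop}
    (h₁ : ∃ i, P i) (h₂ : ∃ i, ¬ P i) : ∃ i, P i ∧ ¬ P (i - 1) := by
  obtain ⟨i, hi, hi'⟩ := ZMod.exists_and_not_add_one (P := fun i => ¬ P i)
    (h₂.imp fun _ h => h) (h₁.imp fun _ h => not_not.2 h)
  exact ⟨i + 1, not_not.1 hi', by simpa using hi⟩

structure IntervalModel (G : SimpleGraph V) (X : Set V) where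
  left : V → ℝ
  right : V → ℝ
  left_le_right : ∀ v ∈ X, left v ≤ right v
  adj_iff : ∀ u ∈ X, ∀ v ∈ X, u ≠ v → (G.Adj u v ↔ left u ≤ right v ∧ left v ≤ right u)

lemma IsIntervalGraph.nonempty_intervalModel {X : Set V} (h : IsIntervalGraph (G.induce X)) :
    Nonempty (IntervalModel G X) := by
  classical
  obtain ⟨f, hIcc, hadj⟩ := h
  choose a b hab hf using hIcc
  refine ⟨⟨fun v => if hv : v ∈ X then a ⟨v, hv⟩ else 0,
    fun v => if hv : v ∈ X then b ⟨v, hv⟩ else 0, fun v hv => by simpa [hv] using hab _,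
    fun u hu v hv huv => ?_⟩⟩
  rw [show G.Adj u v ↔ (G.induce X).Adj ⟨u, hu⟩ ⟨v, hv⟩ from Iff.rfl,
    hadj _ _ (by simpa using huv), hf, hf, Icc_inter_Icc, nonempty_Icc]
  simp only [dif_pos hu, dif_pos hv, sup_le_iff, le_inf_iff]
  have := hab ⟨u, hu⟩
  have := hab ⟨v, hv⟩
  tauto

namespace IntervalModel

variable {X : Set V} {u v c : V}

lemma left_le_right_of_adj (M : IntervalModel G X) (hu : u ∈ X) (hv : v ∈ X) (h : G.Adj u v) :
    M.left u ≤ M.right v :=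
  ((M.adj_iff u hu v hv h.ne).1 h).1

lemma right_lt_left_or (M : IntervalModel G X) (hu : u ∈ X) (hv : v ∈ X)
    (h : v ∉ closedNbhd G u) :
    M.right u < M.left v ∨ M.right v < M.left u := by
  have hne : u ≠ v := fun huv => h (Or.inl huv.symm)
  by_contra! h'
  exact h (Or.inr ((M.adj_iff u hu v hv hne).2 ⟨h'.2, h'.1⟩))

/-- The vertex whose interval starts last would force its two neighbours on the cycle to meet. -/
theorem false_of_cycle (M : IntervalModel G X) {n : ℕ} [NeZero n] (p : ZMod n → V)
    (hpX : ∀ k, p k ∈ X) (hadj : ∀ k, G.Adj (p k) (p (k + 1)))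
    (hfar : ∀ k, p (k + 2) ∉ closedNbhd G (p k)) : False := by
  obtain ⟨i, hi⟩ := Finite.exists_max fun k => M.left (p k)
  have hprev := M.left_le_right_of_adj (hpX _) (hpX _) (hadj (i - 1)).symm
  have hnext := M.left_le_right_of_adj (hpX _) (hpX _) (hadj i)
  rw [sub_add_cancel] at hprev
  have hfar' := hfar (i - 1)
  rw [show i - 1 + 2 = i + 1 by ring] at hfar'
  rcases M.right_lt_left_or (hpX _) (hpX _) hfar' with h | h
  · linarith [hi (i + 1)]
  · linarith [hi (i - 1)]

lemma right_lt_left_iff_of_adj (M : IntervalModel G X) (hc : c ∈ X) (hu : u ∈ X) (hv : v ∈ X)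
    (huv : G.Adj u v) (hcu : u ∉ closedNbhd G c) (hcv : v ∉ closedNbhd G c) :
    M.right u < M.left c ↔ M.right v < M.left c := by
  have h₁ := M.left_le_right_of_adj hu hv huv
  have h₂ := M.left_le_right_of_adj hv hu huv.symm
  have := M.left_le_right c hc
  rcases M.right_lt_left_or hc hu hcu with h | h <;>
    rcases M.right_lt_left_or hc hv hcv with h' | h' <;>
    constructor <;> intro <;> linarith

lemma right_lt_left_iff_of_isChain (M : IntervalModel G X) (hc : c ∈ X) {P : List V}
    (hP : P.IsChain G.Adj) (hPX : ∀ w ∈ P, w ∈ X ∧ w ∉ closedNbhd G c) (hu : u ∈ P) (hv : v ∈ P) :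
    M.right u < M.left c ↔ M.right v < M.left c := by
  induction hP generalizing u v with
  | nil => simp at hu
  | singleton a => simp_all
  | @cons_cons a b l hab _ ih =>
    have hab' := M.right_lt_left_iff_of_adj hc (hPX a (by simp)).1 (hPX b (by simp)).1 hab
      (hPX a (by simp)).2 (hPX b (by simp)).2
    have ih' := fun {u v : V} => ih (u := u) (v := v) fun w hw => hPX w (.tail a hw)
    simp only [List.mem_cons] at hu hv ih'
    rcases hu with rfl | hu <;> rcases hv with rfl | hv
    · rfl
    · exact hab'.trans (ih' (.inl rfl) hv)
    · exact (ih' hu (.inl rfl)).trans hab'.symm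
    · exact ih' hu hv

lemma sides_of_isChain (M : IntervalModel G X) {a b c : V} (ha : a ∈ X) {P : List V}
    (hP : P.IsChain G.Adj) (hPX : ∀ w ∈ P, w ∈ X ∧ w ∉ closedNbhd G a) (hb : b ∈ P)
    (hc : c ∈ P) :
    (M.right b < M.left a ∧ M.right c < M.left a) ∨
      (M.right a < M.left b ∧ M.right a < M.left c) := by
  have hbc := M.right_lt_left_iff_of_isChain ha hP hPX hb hc
  have := M.right_lt_left_or ha (hPX b hb).1 (hPX b hb).2
  have := M.right_lt_left_or ha (hPX c hc).1 (hPX c hc).2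
  tauto

theorem false_of_asteroidal (M : IntervalModel G X) {a₁ a₂ a₃ : V} {P₁ P₂ P₃ : List V}
    (hP₁ : P₁.IsChain G.Adj) (hP₂ : P₂.IsChain G.Adj) (hP₃ : P₃.IsChain G.Adj)
    (hPX₁ : ∀ w ∈ P₁, w ∈ X ∧ w ∉ closedNbhd G a₁)
    (hPX₂ : ∀ w ∈ P₂, w ∈ X ∧ w ∉ closedNbhd G a₂)
    (hPX₃ : ∀ w ∈ P₃, w ∈ X ∧ w ∉ closedNbhd G a₃)
    (h₂₁ : a₂ ∈ P₁) (h₃₁ : a₃ ∈ P₁) (h₁₂ : a₁ ∈ P₂) (h₃₂ : a₃ ∈ P₂) (h₁₃ : a₁ ∈ P₃)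
    (h₂₃ : a₂ ∈ P₃) : False := by
  have ha₁ := (hPX₂ a₁ h₁₂).1
  have ha₂ := (hPX₁ a₂ h₂₁).1
  have ha₃ := (hPX₁ a₃ h₃₁).1
  have := M.left_le_right a₁ ha₁
  have := M.left_le_right a₂ ha₂
  have := M.left_le_right a₃ ha₃
  rcases M.sides_of_isChain ha₁ hP₁ hPX₁ h₂₁ h₃₁ with h₁ | h₁ <;>
    rcases M.sides_of_isChain ha₂ hP₂ hPX₂ h₁₂ h₃₂ with h₂ | h₂ <;>
    rcases M.sides_of_isChain ha₃ hP₃ hPX₃ h₁₃ h₂₃ with h₃ | h₃ <;>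
    linarith [h₁.1, h₁.2, h₂.1, h₂.2, h₃.1, h₃.2]

theorem false_of_longClaw (M : IntervalModel G X) {c m₁ m₂ m₃ a₁ a₂ a₃ : V}
    (hX : ∀ w ∈ [c, m₁, a₁, m₂, a₂, m₃, a₃], w ∈ X)
    (hc₁ : G.Adj c m₁) (hc₂ : G.Adj c m₂) (hc₃ : G.Adj c m₃)
    (h₁ : G.Adj m₁ a₁) (h₂ : G.Adj m₂ a₂) (h₃ : G.Adj m₃ a₃)
    (hN₁ : ∀ w ∈ [a₂, m₂, c, m₃, a₃], w ∉ closedNbhd G a₁)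
    (hN₂ : ∀ w ∈ [a₁, m₁, c, m₃, a₃], w ∉ closedNbhd G a₂)
    (hN₃ : ∀ w ∈ [a₁, m₁, c, m₂, a₂], w ∉ closedNbhd G a₃) : False := by
  simp only [List.mem_cons, List.not_mem_nil, or_false, forall_eq_or_imp, forall_eq] at hX
  refine M.false_of_asteroidal (a₁ := a₁) (a₂ := a₂) (a₃ := a₃) (P₁ := [a₂, m₂, c, m₃, a₃])
    (P₂ := [a₁, m₁, c, m₃, a₃]) (P₃ := [a₁, m₁, c, m₂, a₂]) ?_ ?_ ?_ ?_ ?_ ?_ ?_ ?_ ?_ ?_ ?_ ?_ <;>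
    simp_all [G.adj_comm]

/-- The ends `v₁, v₅` cannot lie on the same side of `v₃` (the interval of `v₂` or of `v₄` would
reach the other end), so the interval of `y` covers that of `v₃`. -/
theorem adj_of_adj_middle (M : IntervalModel G X) {v₁ v₂ v₃ v₄ v₅ y w : V}
    (hX : ∀ x ∈ [v₁, v₂, v₃, v₄, v₅, y, w], x ∈ X)
    (h₁₂ : G.Adj v₁ v₂) (h₂₃ : G.Adj v₂ v₃) (h₃₄ : G.Adj v₃ v₄) (h₄₅ : G.Adj v₄ v₅)
    (h₁₃ : v₃ ∉ closedNbhd G v₁) (h₃₅ : v₅ ∉ closedNbhd G v₃) (h₁₄ : v₄ ∉ closedNbhd G v₁)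
    (h₁₅ : v₅ ∉ closedNbhd G v₁) (h₂₅ : v₅ ∉ closedNbhd G v₂)
    (hy₁ : G.Adj y v₁) (hy₅ : G.Adj y v₅) (hw : G.Adj w v₃) (hwy : w ≠ y) : G.Adj w y := by
  simp only [List.mem_cons, List.not_mem_nil, or_false, forall_eq_or_imp, forall_eq] at hX
  obtain ⟨x₁, x₂, x₃, x₄, x₅, xy, xw⟩ := hX
  by_contra hwy'
  obtain ⟨_, _⟩ := (M.adj_iff _ x₁ _ x₂ h₁₂.ne).1 h₁₂
  obtain ⟨_, _⟩ := (M.adj_iff _ x₂ _ x₃ h₂₃.ne).1 h₂₃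
  obtain ⟨_, _⟩ := (M.adj_iff _ x₃ _ x₄ h₃₄.ne).1 h₃₄
  obtain ⟨_, _⟩ := (M.adj_iff _ x₄ _ x₅ h₄₅.ne).1 h₄₅
  obtain ⟨_, _⟩ := (M.adj_iff _ xy _ x₁ hy₁.ne).1 hy₁
  obtain ⟨_, _⟩ := (M.adj_iff _ xy _ x₅ hy₅.ne).1 hy₅
  obtain ⟨_, _⟩ := (M.adj_iff _ xw _ x₃ hw.ne).1 hw
  have := M.left_le_right v₁ x₁
  have := M.left_le_right v₅ x₅
  have hwy'' := M.right_lt_left_or xy xw fun h => h.elim hwy fun h' => hwy' h'.symm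
  have h₁₅' := M.right_lt_left_or x₁ x₅ h₁₅
  have h₁₄' := M.right_lt_left_or x₁ x₄ h₁₄
  have h₂₅' := M.right_lt_left_or x₂ x₅ h₂₅
  rcases M.right_lt_left_or x₁ x₃ h₁₃ with h₁ | h₁ <;>
    rcases M.right_lt_left_or x₃ x₅ h₃₅ with h₅ | h₅
  · rcases hwy'' with h | h <;> linarith
  · rcases h₁₅' with h | h <;> rcases h₁₄' with h' | h' <;> rcases h₂₅' with h'' | h'' <;>
      linarith
  · rcases h₁₅' with h | h <;> rcases h₁₄' with h' | h' <;> rcases h₂₅' with h'' | h'' <;>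
      linarith
  · rcases hwy'' with h | h <;> linarith

end IntervalModel

theorem Prereduced.isIntervalGraph_induce_s13 (hG : Prereduced G) {X : Set V} (hX : X.Finite)
    (h10 : X.ncard ≤ 10) : IsIntervalGraph (G.induce X) := by
  induction h : X.ncard using Nat.strong_induction_on generalizing X with
  | _ n ih =>
    by_contra hX'
    refine hG X h10 ⟨hX', fun Y hY => ?_⟩
    have hYX := ncard_lt_ncard hY hX
    exact ih _ (h ▸ hYX) (hX.subset hY.1) (by omega) rfl

theorem Prereduced.nonempty_intervalModel_of_length_le (hG : Prereduced G) (l : List V)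
    (hl : l.length ≤ 10) : Nonempty (IntervalModel G {v | v ∈ l}) := by
  classical
  have hl' : {v | v ∈ l} = (l.toFinset : Set V) := by ext; simp
  refine (hG.isIntervalGraph_induce_s13 (l.finite_toSet) ?_).nonempty_intervalModel
  rw [hl', ncard_coe_finset]
  exact l.toFinset_card_le.trans hl

theorem Prereduced.false_of_cycle (hG : Prereduced G) {n : ℕ} [NeZero n] (hn : n ≤ 10)
    (p : ZMod n → V) (hadj : ∀ k, G.Adj (p k) (p (k + 1)))
    (hfar : ∀ k, p (k + 2) ∉ closedNbhd G (p k)) : False := by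
  have hcard : (range p).ncard ≤ 10 := by
    rw [← image_univ]
    calc (p '' univ).ncard ≤ (univ : Set (ZMod n)).ncard := ncard_image_le (toFinite _)
      _ = n := by rw [ncard_univ, Nat.card_zmod]
      _ ≤ 10 := hn
  obtain ⟨M⟩ := (hG.isIntervalGraph_induce_s13 (finite_range p) hcard).nonempty_intervalModel
  exact M.false_of_cycle p mem_range_self hadj hfar

theorem Prereduced.false_of_square (hG : Prereduced G) {a b c d : V} (hab : G.Adj a b)
    (hbc : G.Adj b c) (hcd : G.Adj c d) (hda : G.Adj d a) (hac : c ∉ closedNbhd G a)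
    (hbd : d ∉ closedNbhd G b) : False := by
  refine hG.false_of_cycle (n := 4) (by norm_num) ![a, b, c, d] (fun k => ?_) (fun k => ?_) <;>
    fin_cases k
  exacts [hab, hbc, hcd, hda, hac, hbd, notMem_closedNbhd_comm.1 hac,
    notMem_closedNbhd_comm.1 hbd]

theorem Prereduced.false_of_pentagon (hG : Prereduced G) {a b c d e : V} (hab : G.Adj a b)
    (hbc : G.Adj b c) (hcd : G.Adj c d) (hde : G.Adj d e) (hea : G.Adj e a)
    (hac : c ∉ closedNbhd G a) (hbd : d ∉ closedNbhd G b) (hce : e ∉ closedNbhd G c)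
    (hda : a ∉ closedNbhd G d) (heb : b ∉ closedNbhd G e) : False := by
  refine hG.false_of_cycle (n := 5) (by norm_num) ![a, b, c, d, e] (fun k => ?_) (fun k => ?_) <;>
    fin_cases k
  exacts [hab, hbc, hcd, hde, hea, hac, hbd, hce, hda, heb]

theorem Prereduced.notMem_closedNbhd_of_legs (hG : Prereduced G) {x b c u z : V}
    (hxb : G.Adj x b) (hbc : G.Adj b c) (hc : c ∉ closedNbhd G x) (hxu : G.Adj x u)
    (huz : G.Adj u z) (hz : z ∉ closedNbhd G x) (hub : u ∉ closedNbhd G b)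
    (huc : u ∉ closedNbhd G c) : z ∉ closedNbhd G b ∧ z ∉ closedNbhd G c := by
  have hzb : z ∉ closedNbhd G b := by
    rintro (rfl | hbz)
    · exact hub (.inr huz.symm)
    · exact hG.false_of_square hxb hbz huz.symm hxu.symm hz hub
  refine ⟨hzb, ?_⟩
  rintro (rfl | hcz)
  · exact huc (.inr huz.symm)
  · exact hG.false_of_pentagon hxb hbc hcz huz.symm hxu.symm hc hzb huc
      (notMem_closedNbhd_comm.1 hz) (notMem_closedNbhd_comm.1 hub)

structure IsHoleEnumeration (G : SimpleGraph V) {m : ℕ} (f : ZMod m → V) : Prop where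
  four_le : 4 ≤ m
  injective : f.Injective
  adj_iff : ∀ i j, G.Adj (f i) (f j) ↔ j = i + 1 ∨ i = j + 1

lemma IsHole.exists_isHoleEnumeration {H : Set V} (h : IsHole G H) :
    ∃ (m : ℕ) (f : ZMod m → V), IsHoleEnumeration G f ∧ range f = H := by
  obtain ⟨m, hm, f, hinj, hH, hadj⟩ := h
  exact ⟨m, f, ⟨hm, hinj, hadj⟩, hH⟩

namespace IsHoleEnumeration

variable {m : ℕ} {f : ZMod m → V} {i j : ZMod m}

lemma neZero (hf : IsHoleEnumeration G f) : NeZero m :=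
  ⟨by have := hf.four_le; omega⟩

lemma adj (hf : IsHoleEnumeration G f) (h : j = i + 1) : G.Adj (f i) (f j) :=
  (hf.adj_iff i j).2 (.inl h)

lemma adj' (hf : IsHoleEnumeration G f) (h : i = j + 1) : G.Adj (f i) (f j) :=
  (hf.adj_iff i j).2 (.inr h)

lemma mem_closedNbhd_iff (hf : IsHoleEnumeration G f) :
    f j ∈ closedNbhd G (f i) ↔ j = i ∨ j = i + 1 ∨ i = j + 1 := by
  rw [mem_closedNbhd, hf.injective.eq_iff, hf.adj_iff]

lemma notMem_closedNbhd (hf : IsHoleEnumeration G f) (d : ℕ) (hd : 2 ≤ d ∧ d + 2 ≤ m)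
    (hij : j = i + d) : f j ∉ closedNbhd G (f i) := by
  have hne : ∀ e : ℕ, 0 < e → e < m → (e : ZMod m) ≠ 0 := fun e h0 hm h => by
    have := Nat.le_of_dvd h0 ((ZMod.natCast_eq_zero_iff e m).1 h)
    omega
  rw [hf.mem_closedNbhd_iff]
  rintro (h | h | h)
  · exact hne d (by omega) (by omega) (by linear_combination h - hij)
  · refine hne (d - 1) (by omega) (by omega) ?_
    rw [Nat.cast_sub (by omega)]
    linear_combination h - hij
  · refine hne (d + 1) (by omega) (by omega) ?_
    push_cast
    linear_combination -h - hij

lemma notMem_closedNbhd' (hf : IsHoleEnumeration G f) (d : ℕ) (hd : 2 ≤ d ∧ d + 2 ≤ m)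
    (hij : j = i + d) : f i ∉ closedNbhd G (f j) :=
  notMem_closedNbhd_comm.1 (hf.notMem_closedNbhd d hd hij)

end IsHoleEnumeration

section Hole

variable {m : ℕ} {f : ZMod m → V}

theorem Prereduced.ten_lt (hG : Prereduced G) (hf : IsHoleEnumeration G f) : 10 < m := by
  have := hf.neZero
  have := hf.four_le
  by_contra! hm
  exact hG.false_of_cycle hm f (fun k => hf.adj rfl)
    (fun k => hf.notMem_closedNbhd 2 (by omega) (by norm_num))

theorem Prereduced.adj_of_mem_commonNbrs (hG : Prereduced G) (hf : IsHoleEnumeration G f)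
    {y w : V} (hy : y ∈ commonNbrs G (range f)) (hw : w ∈ closedNbhdSet G (range f))
    (hwy : w ≠ y) : G.Adj w y := by
  have hm := hG.ten_lt hf
  have hy' : ∀ k, G.Adj y (f k) := fun k => hy _ (mem_range_self k)
  obtain ⟨_, ⟨q, rfl⟩, rfl | hq⟩ := mem_closedNbhdSet.1 hw
  · exact (hy' q).symm
  obtain ⟨M⟩ := hG.nonempty_intervalModel_of_length_le
    [f (q - 2), f (q - 1), f q, f (q + 1), f (q + 2), y, w] (by simp)
  exact M.adj_of_adj_middle (fun _ h => h) (hf.adj (by ring)) (hf.adj (by ring)) (hf.adj rfl)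
    (hf.adj (by ring)) (hf.notMem_closedNbhd 2 (by omega) (by push_cast; ring))
    (hf.notMem_closedNbhd 2 (by omega) (by push_cast; ring))
    (hf.notMem_closedNbhd 3 (by omega) (by push_cast; ring))
    (hf.notMem_closedNbhd 4 (by omega) (by push_cast; ring))
    (hf.notMem_closedNbhd 3 (by omega) (by push_cast; ring)) (hy' _) (hy' _) hq.symm hwy

/-- Otherwise `f R` is the centre of a long claw with legs along the hole and through `x`. -/
theorem Prereduced.adj_sub_one_of_adj_of_not_adj_add_one (hG : Prereduced G)
    (hf : IsHoleEnumeration G f) {x u : V} {R : ZMod m} (hxR : G.Adj x (f R))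
    (hnext : ¬ G.Adj x (f (R + 1))) (hxu : G.Adj x u) (hu : ∀ k, u ∉ closedNbhd G (f k)) :
    G.Adj x (f (R - 1)) := by
  have hm := hG.ten_lt hf
  have hN : ∀ k, ¬ G.Adj x (f k) → f k ∉ closedNbhd G x := fun k hk h =>
    h.elim (fun h => hu k (.inr (h ▸ hxu))) hk
  by_contra hprev
  have hnext₂ : f (R + 2) ∉ closedNbhd G x := hN _ fun h => hG.false_of_square hxR (hf.adj rfl)
    (hf.adj (by ring)) h.symm (hN _ hnext) (hf.notMem_closedNbhd 2 (by omega) (by push_cast; ring))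
  have hprev₂ : f (R - 2) ∉ closedNbhd G x := hN _ fun h => hG.false_of_square hxR
    (hf.adj' (by ring)) (hf.adj' (by ring)) h.symm (hN _ hprev)
    (hf.notMem_closedNbhd' 2 (by omega) (by push_cast; ring))
  obtain ⟨M⟩ := hG.nonempty_intervalModel_of_length_le
    [f R, f (R - 1), f (R - 2), f (R + 1), f (R + 2), x, u] (by simp)
  refine M.false_of_longClaw (fun _ h => h) (hf.adj' (by ring)) (hf.adj rfl) hxR.symm
    (hf.adj' (by ring)) (hf.adj (by ring)) hxu ?_ ?_ ?_ <;>
    simp only [List.mem_cons, List.not_mem_nil, or_false, forall_eq_or_imp, forall_eq]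
  · exact ⟨hf.notMem_closedNbhd 4 (by omega) (by push_cast; ring),
      hf.notMem_closedNbhd 3 (by omega) (by push_cast; ring),
      hf.notMem_closedNbhd 2 (by omega) (by push_cast; ring),
      notMem_closedNbhd_comm.1 hprev₂, hu _⟩
  · exact ⟨hf.notMem_closedNbhd' 4 (by omega) (by push_cast; ring),
      hf.notMem_closedNbhd' 3 (by omega) (by push_cast; ring),
      hf.notMem_closedNbhd' 2 (by omega) (by push_cast; ring),
      notMem_closedNbhd_comm.1 hnext₂, hu _⟩
  · exact ⟨notMem_closedNbhd_comm.1 (hu _), notMem_closedNbhd_comm.1 (hu _),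
      notMem_closedNbhd_comm.1 (hu _), notMem_closedNbhd_comm.1 (hu _),
      notMem_closedNbhd_comm.1 (hu _)⟩

/-- `x` is the centre of a long claw with legs through `f L`, `f R` and `u`; squares and pentagons
rule out a short gap between `f R` and `f L`. -/
theorem Prereduced.false_of_two_ends (hG : Prereduced G) (hf : IsHoleEnumeration G f)
    {x u z : V} {L R : ZMod m} (hxL : G.Adj x (f L)) (hprev : ¬ G.Adj x (f (L - 1)))
    (hxR : G.Adj x (f R)) (hnext : ¬ G.Adj x (f (R + 1))) (hLR : L ≠ R) (hxu : G.Adj x u)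
    (hu : ∀ k, u ∉ closedNbhd G (f k)) (huz : G.Adj u z) (hz : z ∉ closedNbhd G x) : False := by
  have hm := hG.ten_lt hf
  have hN : ∀ k, ¬ G.Adj x (f k) → f k ∉ closedNbhd G x := fun k hk h =>
    h.elim (fun h => hu k (.inr (h ▸ hxu))) hk
  have hnext₂ : ¬ G.Adj x (f (R + 2)) := fun h => hG.false_of_square hxR (hf.adj rfl)
    (hf.adj (by ring)) h.symm (hN _ hnext) (hf.notMem_closedNbhd 2 (by omega) (by push_cast; ring))
  have hL₂ : L ≠ R + 2 := by rintro rfl; exact hnext₂ hxL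
  have hL₃ : L ≠ R + 3 := by
    rintro rfl
    exact hG.false_of_pentagon hxR (hf.adj rfl) (hf.adj (by ring)) (hf.adj (by ring)) hxL.symm
      (hN _ hnext) (hf.notMem_closedNbhd 2 (by omega) (by push_cast; ring))
      (hf.notMem_closedNbhd 2 (by omega) (by push_cast; ring))
      (notMem_closedNbhd_comm.1 (hN _ hnext₂))
      (hf.notMem_closedNbhd' 3 (by omega) (by push_cast; ring))
  have hL₁ : L ≠ R + 1 := by rintro rfl; exact hnext hxL
  have hfar : ∀ {i j : ZMod m}, ¬ (j = i ∨ j = i + 1 ∨ i = j + 1) → f j ∉ closedNbhd G (f i) :=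
    fun h => by rwa [hf.mem_closedNbhd_iff]
  have hzL := hG.notMem_closedNbhd_of_legs hxL (hf.adj' (by ring)) (hN _ hprev) hxu huz hz
    (hu _) (hu _)
  have hzR := hG.notMem_closedNbhd_of_legs hxR (hf.adj rfl) (hN _ hnext) hxu huz hz
    (hu _) (hu _)
  obtain ⟨M⟩ := hG.nonempty_intervalModel_of_length_le
    [x, f L, f (L - 1), f R, f (R + 1), u, z] (by simp)
  refine M.false_of_longClaw (fun _ h => h) hxL hxR hxu (hf.adj' (by ring)) (hf.adj rfl) huz
    ?_ ?_ ?_ <;>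
    simp only [List.mem_cons, List.not_mem_nil, or_false, forall_eq_or_imp, forall_eq]
  · exact ⟨hfar (by grind), hfar (by grind), notMem_closedNbhd_comm.1 (hN _ hprev), hu _,
      hzL.2⟩
  · exact ⟨hfar (by grind), hfar (by grind), notMem_closedNbhd_comm.1 (hN _ hnext), hu _,
      hzR.2⟩
  · exact ⟨notMem_closedNbhd_comm.1 hzL.2, notMem_closedNbhd_comm.1 hzL.1,
      notMem_closedNbhd_comm.1 hz, notMem_closedNbhd_comm.1 hzR.1,
      notMem_closedNbhd_comm.1 hzR.2⟩

theorem Prereduced.mem_commonNbrs_of_adj_of_notMem (hG : Prereduced G)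
    (hf : IsHoleEnumeration G f) {x u z : V} (hx : x ∈ closedNbhdSet G (range f))
    (hxu : G.Adj x u) (hu : u ∉ closedNbhdSet G (range f)) (huz : G.Adj u z)
    (hz : z ∉ closedNbhd G x) : x ∈ commonNbrs G (range f) := by
  have := hf.neZero
  have hu' : ∀ k, u ∉ closedNbhd G (f k) := fun k h =>
    hu (mem_closedNbhdSet.2 ⟨_, mem_range_self k, h⟩)
  have hex : ∃ k, G.Adj x (f k) := by
    obtain ⟨_, ⟨k, rfl⟩, rfl | h⟩ := mem_closedNbhdSet.1 hx
    · exact absurd (.inr hxu) (hu' k)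
    · exact ⟨k, h.symm⟩
  by_contra hnot
  have hnot' : ∃ k, ¬ G.Adj x (f k) := by simpa [commonNbrs] using hnot
  obtain ⟨R, hR, hnext⟩ := ZMod.exists_and_not_add_one hex hnot'
  obtain ⟨L, hL, hprev⟩ := ZMod.exists_and_not_sub_one hex hnot'
  have hR' := hG.adj_sub_one_of_adj_of_not_adj_add_one hf hR hnext hxu hu'
  exact hG.false_of_two_ends hf hL hprev hR hnext (by rintro rfl; exact hprev hR') hxu hu' huz hz

end Hole

end

theorem stmt_13_general {V : Type*} (G : SimpleGraph V) (hG : Prereduced G)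
    (H₁ H₂ : Set V) (h1 : IsHole G H₁) (h2 : IsHole G H₂)
    (hadj : (H₁ ∩ closedNbhdSet G H₂).Nonempty)
    (hnsub : ¬ H₁ ⊆ closedNbhdSet G H₂) :
    H₁ ∩ closedNbhdSet G H₂ ⊆ commonNbrs G H₂ ∧ Disjoint H₁ H₂ := by
  obtain ⟨m₁, f₁, hf₁, rfl⟩ := h1.exists_isHoleEnumeration
  obtain ⟨m₂, f₂, hf₂, rfl⟩ := h2.exists_isHoleEnumeration
  have := hf₁.neZero
  have hm₁ := hG.ten_lt hf₁
  set N := closedNbhdSet G (range f₂)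
  obtain ⟨i, hi, hi₁⟩ : ∃ i, f₁ i ∈ N ∧ f₁ (i + 1) ∉ N := by
    obtain ⟨_, ⟨i, rfl⟩, hi⟩ := hadj
    obtain ⟨_, ⟨j, rfl⟩, hj⟩ := not_subset.1 hnsub
    exact ZMod.exists_and_not_add_one ⟨i, hi⟩ ⟨j, hj⟩
  have hy := hG.mem_commonNbrs_of_adj_of_notMem (z := f₁ (i + 2)) hf₂ hi (hf₁.adj rfl) hi₁
    (hf₁.adj (by ring)) (hf₁.notMem_closedNbhd 2 (by omega) (by push_cast; ring))
  have hsub : range f₁ ∩ N ⊆ commonNbrs G (range f₂) := by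
    rintro _ ⟨⟨j, rfl⟩, hj⟩
    obtain rfl | hji := eq_or_ne j i
    · exact hy
    rcases (hf₁.adj_iff j i).1 (hG.adj_of_mem_commonNbrs hf₂ hy hj (hf₁.injective.ne hji))
      with rfl | rfl
    · have hfar := hf₁.notMem_closedNbhd (i := j - 1) (j := j + 1) 2 (by omega)
        (by push_cast; ring)
      have hj₁ : f₁ (j - 1) ∉ N := fun h =>
        hfar (.inr (hG.adj_of_mem_commonNbrs hf₂ hy h fun h' => hfar (.inl h'.symm)))
      exact hG.mem_commonNbrs_of_adj_of_notMem (z := f₁ (j - 2)) hf₂ hj (hf₁.adj' (by ring))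
        hj₁ (hf₁.adj' (by ring)) (hf₁.notMem_closedNbhd' 2 (by omega) (by push_cast; ring))
    · exact absurd hj hi₁
  refine ⟨hsub, disjoint_left.2 fun v hv₁ hv₂ => ?_⟩
  exact G.irrefl (hsub ⟨hv₁, mem_closedNbhdSet_of_mem hv₂⟩ v hv₂)

/-- If two holes of a prereduced graph are adjacent but not congenial,
then every neighbor of one hole on the other is a common neighbor; in particular the
holes are disjoint. -/
theorem stmt_13 {V : Type*} [Fintype V] (G : SimpleGraph V) (hG : Prereduced G)
    (H₁ H₂ : Set V) (h1 : IsHole G H₁) (h2 : IsHole G H₂)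
    (hadj : (H₁ ∩ closedNbhdSet G H₂).Nonempty)
    (hnsub : ¬ H₁ ⊆ closedNbhdSet G H₂) :
    H₁ ∩ closedNbhdSet G H₂ ⊆ commonNbrs G H₂ ∧ Disjoint H₁ H₂ :=
  stmt_13_general G hG H₁ H₂ h1 h2 hadj hnsub
end
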